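/- Let q ≥ 3 be odd and k ≥ 2. For each j ∈ {1,...,k}, let α_i^(j) be the i-th element of the block 0^(j-1)1·reverse(F(n-j,k)) of the binary Gray code F(n,k), and let Γ_j = ε(α_1^(j)) ∘ reverse(ε(α_2^(j))) ∘ ε(α_3^(j)) ∘ ... (alternating, with the last block reversed iff the block count is even). Then F(n,q,k) = Γ_1 ∘ Γ_2 ∘ ... ∘ Γ_k is a Gray code list with Hamming distance 1 for the set of length-n strings over {0,...,q-1} avoiding k consecutive 0's. -/

import Mathlib

/-!
Write `binarize w` for the binary string obtained from `w` by turning every nonzero letter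
into `1`. The expansion `ε(β)` lists exactly the strings `w` over `{0, …, q-1}` with
`binarize w = β`, and it is a Gray code because `place β` preserves Hamming distance. Since
avoiding `0^k` only depends on `binarize w`, the lists `ε(β)` for `β ∈ F(n,k)` partition the
strings to be listed, which gives membership and `Nodup`.

For the Gray property, the first element of `ε(β)` is `β` itself, and since `q - 1` is even,
`G(t, q-1)` ends at `(q-2) 0 ⋯ 0`, so `ε(0^j 1 γ)` ends at `0^j (q-1) γ`. Two neighbours
`0^j 1 w`, `0^j 1 w'` of a block of `F(n,k)` therefore have expansions whose first elements,
and also whose last elements, differ in one letter, and this is what the alternation inside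
`Γ_j` needs.
Between blocks, with `z` the last element of `F(n-j-1, k)`, `Γ_j` ends at one end of the
expansion of `0^(j-1) 1 1 z`, namely at `0^(j-1) a 1 z` with `a ∈ {1, q-1}`, while `Γ_(j+1)`
starts at `0^j 1 z`.
-/

def hamming {α : Type*} [DecidableEq α] (u v : List α) : ℕ :=
  (List.zip u v).countP (fun p => decide (p.1 ≠ p.2))

/-- The reflected Gray code `G(n, q)` over the alphabet `{0, …, q-1}`. -/
def grayN (q : ℕ) : ℕ → List (List ℕ)
  | 0 => [[]]
  | n+1 => ((List.range q).map (fun i =>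
      (if i % 2 = 0 then grayN q n else (grayN q n).reverse).map (fun w => i :: w))).flatten

/-- The binary reflected Gray code `C(n)`. -/
def C : ℕ → List (List ℕ)
  | 0 => [[]]
  | n+1 => (C n).reverse.map (fun w => 1 :: w) ++ (C n).map (fun w => 0 :: w)

def F (k : ℕ) : ℕ → List (List ℕ)
  | n =>
    if h : n < k ∨ k = 0 then C n
    else ((List.range k).map (fun j =>
      (F k (n - (j+1))).reverse.map (fun w => List.replicate j 0 ++ 1 :: w))).flatten
termination_by n => n
decreasing_by push_neg at h; omega

/-- Replace the ones of a binary string, from left to right, by the symbols of `x`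
(zeros stay in place). -/
def place : List ℕ → List ℕ → List ℕ
  | [], _ => []
  | b :: β, x => if b = 0 then 0 :: place β x else x.headD 1 :: place β x.tail

/-- The expansion `ε(β)`: the ones of `β` replaced by the successive strings of
`G(t, q-1) ⊕ 1`, where `t` is the number of ones of `β`. -/
def expansion (q : ℕ) (β : List ℕ) : List (List ℕ) :=
  ((grayN (q-1) (β.count 1)).map (fun w => w.map (· + 1))).map (place β)

/-- The `i`-th block (0-indexed) is reversed exactly when `i` is odd. -/
def alt {α : Type*} (Ls : List (List α)) : List α :=
  (Ls.zipIdx.map (fun p => if p.2 % 2 = 0 then p.1 else p.1.reverse)).flatten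

def Gamma (q k n j : ℕ) : List (List ℕ) :=
  alt (((F k (n - j)).reverse.map
    (fun w => List.replicate (j - 1) 0 ++ 1 :: w)).map (expansion q))

def Fodd (q k n : ℕ) : List (List ℕ) :=
  ((List.range k).map (fun j => Gamma q k n (j + 1))).flatten

section Hamming

variable {α : Type*} [DecidableEq α]

@[simp]
lemma hamming_nil_left (v : List α) : hamming [] v = 0 := rfl

@[simp]
lemma hamming_nil_right (u : List α) : hamming u [] = 0 := by
  cases u <;> rfl

@[simp]
lemma hamming_cons_cons (a b : α) (u v : List α) :
    hamming (a :: u) (b :: v) = (if a = b then 0 else 1) + hamming u v := by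
  simp only [hamming, List.zip_cons_cons, List.countP_cons]
  split <;> simp_all [Nat.add_comm]

@[simp]
lemma hamming_self (u : List α) : hamming u u = 0 := by
  induction u <;> simp [*]

lemma hamming_comm (u v : List α) : hamming u v = hamming v u := by
  induction u generalizing v with
  | nil => cases v <;> rfl
  | cons a u ih => cases v <;> simp [ih, eq_comm]

@[simp]
lemma hamming_append_left (p u v : List α) : hamming (p ++ u) (p ++ v) = hamming u v := by
  induction p <;> simp [*]

lemma hamming_map {β : Type*} [DecidableEq β] {f : α → β} (hf : f.Injective) (u v : List α) :
    hamming (u.map f) (v.map f) = hamming u v := by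
  induction u generalizing v with
  | nil => rfl
  | cons a u ih => cases v <;> simp [hf.eq_iff, ih]

lemma eq_of_hamming_eq_zero {u v : List α} (hlen : u.length = v.length) (h : hamming u v = 0) :
    u = v := by
  induction u generalizing v with
  | nil => simpa [eq_comm] using hlen
  | cons a u ih =>
    cases v with
    | nil => simp at hlen
    | cons b v =>
      simp only [hamming_cons_cons, Nat.add_eq_zero_iff, ite_eq_left_iff, one_ne_zero,
        imp_false, not_not] at h
      simp [h.1, ih (by simpa using hlen) h.2]

end Hamming

section GrayCode

variable {α : Type*} [DecidableEq α]

abbrev IsGrayCode (L : List (List α)) : Prop :=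
  L.IsChain fun u v => hamming u v = 1

lemma IsGrayCode.reverse {L : List (List α)} (h : IsGrayCode L) : IsGrayCode L.reverse :=
  List.isChain_reverse.2 (h.imp fun u v huv => by rwa [hamming_comm])

lemma IsGrayCode.map {β : Type*} [DecidableEq β] {L : List (List α)} {f : List α → List β}
    (hf : ∀ u ∈ L, ∀ v ∈ L, hamming (f u) (f v) = hamming u v) (h : IsGrayCode L) :
    IsGrayCode (L.map f) :=
  (List.isChain_map f).2 (h.imp_of_mem_imp fun u v hu hv huv => (hf u hu v hv).trans huv)

lemma IsGrayCode.map_append_left {L : List (List α)} (h : IsGrayCode L) (p : List α) :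
    IsGrayCode (L.map (p ++ ·)) :=
  h.map fun u _ v _ => hamming_append_left p u v

lemma isGrayCode_flatten_range {m : ℕ} {f : ℕ → List (List α)} (hne : ∀ i < m, f i ≠ [])
    (hf : ∀ i < m, IsGrayCode (f i))
    (hjoin : ∀ i, i + 1 < m →
      ∀ x ∈ (f i).getLast?, ∀ y ∈ (f (i + 1)).head?, hamming x y = 1) :
    IsGrayCode ((List.range m).map f).flatten := by
  have hnil : [] ∉ (List.range m).map f := by
    simpa [eq_comm (a := [])] using hne
  refine (List.isChain_flatten hnil).2 ⟨by simpa using hf, (List.isChain_map f).2 ?_⟩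
  rcases m with _ | m
  · simp
  · exact (List.isChain_range_succ _ m).2 fun i hi => hjoin i (by omega)

end GrayCode

lemma List.nodup_flatten_range {β : Type*} {m : ℕ} {f : ℕ → List β} (g : β → ℕ)
    (hf : ∀ i < m, (f i).Nodup) (hg : ∀ i < m, ∀ x ∈ f i, g x = i) :
    ((List.range m).map f).flatten.Nodup := by
  refine List.nodup_flatten.2 ⟨by simpa using hf, List.pairwise_map.2 ?_⟩
  refine List.nodup_range.imp_of_mem fun {i j} hi hj hij x hxi hxj => hij ?_
  rw [List.mem_range] at hi hj
  rw [← hg i hi x hxi, hg j hj x hxj]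

section Alternating

variable {α : Type*}

@[simp]
lemma alt_nil : alt ([] : List (List α)) = [] := rfl

@[simp]
lemma alt_singleton (L : List α) : alt [L] = L := by
  simp [alt]

lemma alt_cons_cons (L L' : List α) (Ls : List (List α)) :
    alt (L :: L' :: Ls) = L ++ L'.reverse ++ alt Ls := by
  simp [alt, List.zipIdx_eq_map_add (i := 2), Function.comp_def, Nat.add_mod_left]

lemma alt_perm_flatten : ∀ Ls : List (List α), (alt Ls).Perm Ls.flatten
  | [] => .rfl
  | [L] => by simp
  | L :: L' :: Ls => by
    rw [alt_cons_cons, List.flatten_cons, List.flatten_cons, ← List.append_assoc]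
    exact ((List.reverse_perm L').append_left L).append (alt_perm_flatten Ls)

lemma head?_alt_cons {L : List α} (hL : L ≠ []) (Ls : List (List α)) :
    (alt (L :: Ls)).head? = L.head? := by
  cases Ls with
  | nil => simp
  | cons L' Ls => rw [alt_cons_cons, List.append_assoc, List.head?_append_of_ne_nil _ hL]

lemma getLast?_alt : ∀ {Ls : List (List α)}, (∀ L ∈ Ls, L ≠ []) →
    (alt Ls).getLast? =
      Ls.getLast?.bind fun L => if Ls.length % 2 = 1 then L.getLast? else L.head?
  | [], _ => rfl
  | [L], _ => by simp
  | [L, L'], hall => by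
    obtain ⟨a, l, rfl⟩ := List.exists_cons_of_ne_nil (hall L' (by simp))
    simp [alt_cons_cons, List.getLast?_reverse]
  | L :: L' :: M :: Ms, hall => by
    have hM : M ≠ [] := hall M (by simp)
    have halt : alt (M :: Ms) ≠ [] := by
      simpa [← List.head?_eq_none_iff, head?_alt_cons hM] using hM
    have hpar : (Ms.length + 1 + 1 + 1) % 2 = (Ms.length + 1) % 2 := by omega
    rw [alt_cons_cons, List.getLast?_append_of_ne_nil _ halt,
      getLast?_alt fun N hN => hall N (by simp [hN])]
    simp [hpar]

lemma isChain_alt {R : α → α → Prop} (hR : ∀ ⦃a b⦄, R a b → R b a) :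
    ∀ {Ls : List (List α)}, (∀ L ∈ Ls, L ≠ []) → (∀ L ∈ Ls, L.IsChain R) →
    Ls.IsChain (fun L₁ L₂ => (∀ x ∈ L₁.head?, ∀ y ∈ L₂.head?, R x y) ∧
      (∀ x ∈ L₁.getLast?, ∀ y ∈ L₂.getLast?, R x y)) →
    (alt Ls).IsChain R
  | [], _, _, _ => by simp
  | [L], _, hchain, _ => by simpa using hchain L
  | L :: L' :: Ls, hall, hchain, hjoin => by
    have hL' : L' ≠ [] := hall L' (by simp)
    have hrev : L'.reverse.IsChain R :=
      List.isChain_reverse.2 ((hchain L' (by simp)).imp fun _ _ h => hR h)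
    have hfirst : (L ++ L'.reverse).IsChain R :=
      (hchain L (by simp)).append hrev (by simpa using (List.isChain_cons_cons.1 hjoin).1.2)
    have hrest : (alt Ls).IsChain R :=
      isChain_alt hR (fun N hN => hall N (by simp [hN])) (fun N hN => hchain N (by simp [hN]))
        hjoin.tail.tail
    rw [alt_cons_cons]
    refine hfirst.append hrest ?_
    cases Ls with
    | nil => simp
    | cons M Ms =>
      rw [List.getLast?_append_of_ne_nil _ (by simpa using hL'), List.getLast?_reverse,
        head?_alt_cons (hall M (by simp))]
      exact (List.isChain_cons_cons.1 hjoin.tail).1.1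

end Alternating

lemma mem_grayN {q n : ℕ} {w : List ℕ} : w ∈ grayN q n ↔ w.length = n ∧ ∀ b ∈ w, b < q := by
  induction n generalizing w with
  | zero => cases w <;> simp [grayN]
  | succ n ih =>
    have hblock (i : ℕ) (v : List ℕ) :
        v ∈ (if i % 2 = 0 then grayN q n else (grayN q n).reverse) ↔ v ∈ grayN q n := by
      split <;> simp
    cases w with
    | nil => simp [grayN]
    | cons a v => simp [grayN, hblock, ih, and_left_comm]

lemma head?_grayN {q : ℕ} (hq : 0 < q) (n : ℕ) :
    (grayN q n).head? = some (List.replicate n 0) := by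
  induction n with
  | zero => rfl
  | succ n ih =>
    obtain ⟨q, rfl⟩ := Nat.exists_eq_add_one_of_ne_zero hq.ne'
    simp [grayN, List.range_succ_eq_map, ih, List.replicate_succ]

lemma grayN_ne_nil {q : ℕ} (hq : 0 < q) (n : ℕ) : grayN q n ≠ [] := by
  simp [← List.head?_eq_none_iff, head?_grayN hq]

lemma getLast?_grayN_succ {q : ℕ} (hq : Even q) (hq0 : q ≠ 0) (n : ℕ) :
    (grayN q (n + 1)).getLast? = some ((q - 1) :: List.replicate n 0) := by
  obtain ⟨q, rfl⟩ := Nat.exists_eq_add_one_of_ne_zero hq0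
  have hodd : ¬ q % 2 = 0 := by
    rcases hq with ⟨r, hr⟩
    omega
  simp [grayN, List.range_succ, hodd, List.getLast?_reverse, head?_grayN]

lemma isGrayCode_grayN (q n : ℕ) : IsGrayCode (grayN q n) := by
  induction n with
  | zero => simp [grayN]
  | succ n ih =>
    refine isGrayCode_flatten_range (fun i hi => ?_) (fun i _ => ?_) (fun i _ => ?_)
    · split <;> simp [grayN_ne_nil (by omega : 0 < q)]
    · split
      exacts [ih.map_append_left [i], ih.reverse.map_append_left [i]]
    · have hmeet (o : Option (List ℕ)) :
          ∀ x ∈ o.map (i :: ·), ∀ y ∈ o.map ((i + 1) :: ·), hamming x y = 1 := by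
        rcases o with _ | z <;> simp
      rcases Nat.mod_two_eq_zero_or_one i with h | h
      · simpa [h, Nat.succ_mod_two_eq_one_iff.2 h, List.head?_reverse] using
          hmeet (grayN q n).getLast?
      · simpa [h, Nat.succ_mod_two_eq_zero_iff.2 h, List.getLast?_reverse] using
          hmeet (grayN q n).head?

lemma nodup_grayN (q n : ℕ) : (grayN q n).Nodup := by
  induction n with
  | zero => simp [grayN]
  | succ n ih =>
    refine List.nodup_flatten_range (List.headD · 0) (fun i _ => ?_) (fun i _ x hx => ?_)
    · have hcons : Function.Injective (List.cons i) := List.cons_injective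
      split
      exacts [List.Nodup.map hcons ih, List.Nodup.map hcons (List.nodup_reverse.2 ih)]
    · split at hx <;> (obtain ⟨v, -, rfl⟩ := List.mem_map.1 hx; rfl)

lemma C_eq_reverse_grayN (n : ℕ) : C n = (grayN 2 n).reverse := by
  induction n with
  | zero => rfl
  | succ n ih => simp [C, grayN, List.range_succ, ih]

lemma not_replicate_prefix_zeros_one_append {k j : ℕ} (h : j < k) (w : List ℕ) :
    ¬ List.replicate k 0 <+: List.replicate j 0 ++ 1 :: w := by
  induction j generalizing k with
  | zero => cases k <;> simp_all [List.replicate_succ]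
  | succ j ih =>
    obtain ⟨k, rfl⟩ := Nat.exists_eq_add_one_of_ne_zero (by omega : k ≠ 0)
    simpa [List.replicate_succ] using ih (by omega : j < k)

lemma replicate_infix_zeros_one_append_iff {k j : ℕ} (h : j < k) (w : List ℕ) :
    List.replicate k 0 <:+: List.replicate j 0 ++ 1 :: w ↔ List.replicate k 0 <:+: w := by
  induction j with
  | zero =>
    simpa [List.infix_cons_iff] using (not_replicate_prefix_zeros_one_append h w).elim
  | succ j ih =>
    rw [List.replicate_succ, List.cons_append, List.infix_cons_iff, ← ih (by omega),
      ← List.cons_append, ← List.replicate_succ]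
    simp [not_replicate_prefix_zeros_one_append h w]

lemma exists_eq_zeros_one_append {k : ℕ} {α : List ℕ} (hα : ∀ b ∈ α, b < 2)
    (hlen : k ≤ α.length) (hpre : ¬ List.replicate k 0 <+: α) :
    ∃ j < k, ∃ β, α = List.replicate j 0 ++ 1 :: β := by
  induction α generalizing k with
  | nil => simp_all
  | cons b α ih =>
    obtain ⟨k, rfl⟩ := Nat.exists_eq_add_one_of_ne_zero (by rintro rfl; simp at hpre : k ≠ 0)
    obtain rfl | rfl : b = 0 ∨ b = 1 := by have := hα b (by simp); omega
    · obtain ⟨j, hj, β, rfl⟩ := ih (fun b hb => hα b (by simp [hb])) (by simpa using hlen)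
        (by simpa [List.replicate_succ] using hpre)
      exact ⟨j + 1, by omega, β, rfl⟩
    · exact ⟨0, by omega, α, rfl⟩

/-- The block `0^j 1 · reverse(F(n - j - 1, k))` of `F(n, k)` (0-indexed, unlike the paper). -/
def Fblock (k n j : ℕ) : List (List ℕ) :=
  (F k (n - (j + 1))).reverse.map (fun w => List.replicate j 0 ++ 1 :: w)

lemma mem_Fblock {k n j : ℕ} {α : List ℕ} :
    α ∈ Fblock k n j ↔ ∃ w ∈ F k (n - (j + 1)), List.replicate j 0 ++ 1 :: w = α := by
  simp [Fblock]

lemma F_of_lt {k n : ℕ} (h : n < k) : F k n = C n := by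
  rw [F, dif_pos (Or.inl h)]

lemma F_of_le {k n : ℕ} (hk : 0 < k) (h : k ≤ n) :
    F k n = ((List.range k).map (Fblock k n)).flatten := by
  rw [F, dif_neg (by omega)]
  rfl

lemma mem_F {k : ℕ} (hk : 0 < k) {n : ℕ} {α : List ℕ} :
    α ∈ F k n ↔ α.length = n ∧ (∀ b ∈ α, b < 2) ∧ ¬ List.replicate k 0 <:+: α := by
  induction n using Nat.strong_induction_on generalizing α with
  | _ n ih =>
    rcases lt_or_ge n k with h | h
    · rw [F_of_lt h, C_eq_reverse_grayN, List.mem_reverse, mem_grayN]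
      refine ⟨fun ⟨hlen, hbin⟩ => ⟨hlen, hbin, fun hinf => ?_⟩, fun h => ⟨h.1, h.2.1⟩⟩
      have := hinf.length_le
      simp only [List.length_replicate] at this
      omega
    · simp only [F_of_le hk h, List.mem_flatten, List.mem_map, List.mem_range,
        exists_exists_and_eq_and, mem_Fblock]
      constructor
      · rintro ⟨j, hj, w, hw, rfl⟩
        obtain ⟨hlen, hbin, havoid⟩ := ih _ (by omega) |>.1 hw
        refine ⟨by simp; omega, ?_, by rwa [replicate_infix_zeros_one_append_iff hj]⟩
        simp only [List.mem_append, List.mem_replicate, List.mem_cons]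
        rintro b (⟨-, rfl⟩ | rfl | hb)
        exacts [by omega, by omega, hbin b hb]
      · rintro ⟨hlen, hbin, havoid⟩
        obtain ⟨j, hj, w, rfl⟩ :=
          exists_eq_zeros_one_append hbin (by omega) fun hpre => havoid hpre.isInfix
        refine ⟨j, hj, w, (ih _ (by omega)).2 ⟨?_, ?_, ?_⟩, rfl⟩
        · simp at hlen
          omega
        · exact fun b hb => hbin b (by simp [hb])
        · rwa [← replicate_infix_zeros_one_append_iff hj]

lemma replicate_one_mem_F {k : ℕ} (hk : 0 < k) (n : ℕ) : List.replicate n 1 ∈ F k n := by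
  refine mem_F hk |>.2 ⟨List.length_replicate, by simp, fun hinf => ?_⟩
  have := List.eq_of_mem_replicate (hinf.subset (List.mem_replicate.2 ⟨hk.ne', rfl⟩))
  omega

lemma F_ne_nil {k : ℕ} (hk : 0 < k) (n : ℕ) : F k n ≠ [] :=
  List.ne_nil_of_mem (replicate_one_mem_F hk n)

lemma lt_two_of_mem_Fblock {k n j : ℕ} (hk : 0 < k) {α : List ℕ} (hα : α ∈ Fblock k n j) :
    ∀ b ∈ α, b < 2 := by
  obtain ⟨w, hw, rfl⟩ := mem_Fblock.1 hα
  simp only [List.mem_append, List.mem_replicate, List.mem_cons]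
  rintro b (⟨-, rfl⟩ | rfl | hb)
  exacts [by omega, by omega, (mem_F hk |>.1 hw).2.1 b hb]

lemma head?_F_succ {k : ℕ} (hk : 0 < k) (m : ℕ) :
    (F k (m + 1)).head? = (F k m).getLast?.map (1 :: ·) := by
  rcases lt_or_ge (m + 1) k with h | h
  · rw [F_of_lt h, F_of_lt (by omega), C_eq_reverse_grayN, C_eq_reverse_grayN,
      List.head?_reverse, List.getLast?_reverse, getLast?_grayN_succ even_two two_ne_zero,
      head?_grayN two_pos]
    rfl
  · obtain ⟨k, rfl⟩ := Nat.exists_eq_add_one_of_ne_zero hk.ne'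
    have hblock : Fblock (k + 1) (m + 1) 0 ≠ [] := by simp [Fblock, F_ne_nil hk]
    rw [F_of_le hk h, List.range_succ_eq_map, List.map_cons, List.flatten_cons,
      List.head?_append_of_ne_nil _ hblock]
    simp [Fblock, List.head?_reverse]

lemma head?_Fblock (k n j : ℕ) :
    (Fblock k n j).head? =
      (F k (n - (j + 1))).getLast?.map (List.replicate j 0 ++ 1 :: ·) := by
  simp [Fblock, List.head?_reverse]

lemma getLast?_Fblock {k n j : ℕ} (hk : 0 < k) (h : j + 1 < n) :
    (Fblock k n j).getLast? =
      (F k (n - (j + 2))).getLast?.map (List.replicate j 0 ++ 1 :: 1 :: ·) := by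
  have hn : n - (j + 1) = n - (j + 2) + 1 := by omega
  simp [Fblock, List.getLast?_reverse, hn, head?_F_succ hk, Function.comp_def]

lemma hamming_zeros_cons_one_append {a : ℕ} (ha : a ≠ 0) (j : ℕ) (z : List ℕ) :
    hamming (List.replicate j 0 ++ a :: 1 :: z) (List.replicate (j + 1) 0 ++ 1 :: z) = 1 := by
  simp [List.replicate_succ', ha]

lemma Fblock_ne_nil {k : ℕ} (hk : 0 < k) (n j : ℕ) : Fblock k n j ≠ [] := by
  simp [Fblock, F_ne_nil hk]

lemma isGrayCode_F {k : ℕ} (hk : 0 < k) (n : ℕ) : IsGrayCode (F k n) := by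
  induction n using Nat.strong_induction_on with
  | _ n ih =>
    rcases lt_or_ge n k with h | h
    · rw [F_of_lt h, C_eq_reverse_grayN]
      exact (isGrayCode_grayN 2 n).reverse
    · rw [F_of_le hk h]
      refine isGrayCode_flatten_range (fun j _ => Fblock_ne_nil hk n j)
        (fun j _ => (ih _ (by omega)).reverse.map fun u _ v _ => by simp) (fun j hj => ?_)
      rw [getLast?_Fblock hk (by omega), head?_Fblock, show n - (j + 1 + 1) = n - (j + 2) by rfl]
      rcases (F k (n - (j + 2))).getLast? with _ | z
      · simp
      · simpa using hamming_zeros_cons_one_append one_ne_zero j z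

lemma isGrayCode_Fblock {k : ℕ} (hk : 0 < k) (n j : ℕ) : IsGrayCode (Fblock k n j) :=
  (isGrayCode_F hk _).reverse.map fun u _ v _ => by simp

lemma zeros_one_append_injective (j : ℕ) :
    Function.Injective fun w : List ℕ => List.replicate j 0 ++ 1 :: w :=
  fun u v huv => by simpa using huv

lemma idxOf_one_of_mem_Fblock {k n j : ℕ} {α : List ℕ} (hα : α ∈ Fblock k n j) :
    α.idxOf 1 = j := by
  obtain ⟨w, -, rfl⟩ := mem_Fblock.1 hα
  clear hα
  induction j with
  | zero => simp
  | succ j ih => simp [List.replicate_succ, ih]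

lemma nodup_F {k : ℕ} (hk : 0 < k) (n : ℕ) : (F k n).Nodup := by
  induction n using Nat.strong_induction_on with
  | _ n ih =>
    rcases lt_or_ge n k with h | h
    · rw [F_of_lt h, C_eq_reverse_grayN]
      exact List.nodup_reverse.2 (nodup_grayN 2 n)
    · rw [F_of_le hk h]
      exact List.nodup_flatten_range (List.idxOf 1)
        (fun j _ => (List.nodup_reverse.2 (ih _ (by omega))).map (zeros_one_append_injective j))
        (fun j _ _ => idxOf_one_of_mem_Fblock)

lemma nodup_Fblock {k : ℕ} (hk : 0 < k) (n j : ℕ) : (Fblock k n j).Nodup :=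
  (List.nodup_reverse.2 (nodup_F hk _)).map (zeros_one_append_injective j)

/-- The binary string `β` of which `w` is a letter-by-letter expansion. -/
def binarize (w : List ℕ) : List ℕ := w.map fun b => if b = 0 then 0 else 1

def nonzeros (w : List ℕ) : List ℕ := w.filter (· ≠ 0)

@[simp]
lemma length_binarize (w : List ℕ) : (binarize w).length = w.length := List.length_map _

lemma replicate_infix_binarize_iff (k : ℕ) (w : List ℕ) :
    List.replicate k 0 <:+: binarize w ↔ List.replicate k 0 <:+: w := by
  constructor
  · rintro ⟨s, t, h⟩
    obtain ⟨u, t', rfl, hu, -⟩ := List.map_eq_append_iff.1 h.symm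
    obtain ⟨s', m, rfl, -, hm⟩ := List.map_eq_append_iff.1 hu
    obtain ⟨hlen, hzero⟩ := List.eq_replicate_iff.1 hm
    refine ⟨s', t', ?_⟩
    rw [show m = List.replicate k 0 from List.eq_replicate_iff.2
      ⟨by simpa using hlen, fun b hb => by simpa using hzero _ (List.mem_map_of_mem hb)⟩]
  · intro h
    simpa [binarize] using h.map fun b => if b = 0 then 0 else 1

lemma binarize_place {α x : List ℕ} (hα : ∀ b ∈ α, b < 2) (hx : ∀ y ∈ x, y ≠ 0) :
    binarize (place α x) = α := by
  induction α generalizing x with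
  | nil => rfl
  | cons b α ih =>
    have hα' : ∀ c ∈ α, c < 2 := fun c hc => hα c (by simp [hc])
    have hhead : x.head?.getD 1 ≠ 0 := by cases x <;> simp_all
    obtain rfl | rfl : b = 0 ∨ b = 1 := by have := hα b (by simp); omega
    · simpa [place, binarize] using ih hα' hx
    · simpa [place, binarize, hhead] using ih hα' fun y hy => hx y (List.mem_of_mem_tail hy)

lemma place_binarize_nonzeros (w : List ℕ) : place (binarize w) (nonzeros w) = w := by
  induction w with
  | nil => rfl
  | cons b w ih => by_cases hb : b = 0 <;> simpa [binarize, nonzeros, place, hb] using ih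

lemma count_one_binarize (w : List ℕ) : (binarize w).count 1 = (nonzeros w).length := by
  induction w with
  | nil => rfl
  | cons b w ih => by_cases hb : b = 0 <;> simpa [binarize, nonzeros, hb] using ih

lemma place_replicate_one {α : List ℕ} (hα : ∀ b ∈ α, b < 2) (m : ℕ) :
    place α (List.replicate m 1) = α := by
  induction α generalizing m with
  | nil => rfl
  | cons b α ih =>
    have hα' : ∀ c ∈ α, c < 2 := fun c hc => hα c (by simp [hc])
    obtain rfl | rfl : b = 0 ∨ b = 1 := by have := hα b (by simp); omega
    · simp [place, ih hα']
    · cases m with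
      | zero => simpa [place] using ih hα' 0
      | succ m => simp [place, ih hα', List.replicate_succ]

lemma place_zeros_one_append (j : ℕ) (β x : List ℕ) :
    place (List.replicate j 0 ++ 1 :: β) x = List.replicate j 0 ++ x.headD 1 :: place β x.tail := by
  induction j with
  | zero => simp [place]
  | succ j ih => simp [List.replicate_succ, place, ih]

lemma mem_place {α x : List ℕ} {b : ℕ} (hb : b ∈ place α x) : b = 0 ∨ b = 1 ∨ b ∈ x := by
  induction α generalizing x with
  | nil => simp [place] at hb
  | cons c α ih =>
    rw [place] at hb
    split at hb
    · rcases List.mem_cons.1 hb with rfl | hb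
      exacts [.inl rfl, ih hb]
    · rcases List.mem_cons.1 hb with rfl | hb
      · cases x <;> simp
      · rcases ih hb with h | h | h
        exacts [.inl h, .inr (.inl h), .inr (.inr (List.mem_of_mem_tail h))]

lemma hamming_place {α x y : List ℕ} (hα : ∀ b ∈ α, b < 2)
    (hx : x.length = α.count 1) (hy : y.length = α.count 1) :
    hamming (place α x) (place α y) = hamming x y := by
  induction α generalizing x y with
  | nil => simp_all
  | cons b α ih =>
    have hα' : ∀ c ∈ α, c < 2 := fun c hc => hα c (by simp [hc])
    obtain rfl | rfl : b = 0 ∨ b = 1 := by have := hα b (by simp); omega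
    · simpa [place] using ih hα' (by simpa using hx) (by simpa using hy)
    · obtain ⟨a, x, rfl⟩ := List.exists_cons_of_length_eq_add_one (by simpa using hx)
      obtain ⟨c, y, rfl⟩ := List.exists_cons_of_length_eq_add_one (by simpa using hy)
      simpa [place] using ih hα' (by simpa using hx) (by simpa using hy)

lemma length_of_mem_map_grayN {q t : ℕ} {u : List ℕ}
    (hu : u ∈ (grayN q t).map (List.map (· + 1))) : u.length = t := by
  obtain ⟨g, hg, rfl⟩ := List.mem_map.1 hu
  simpa using (mem_grayN.1 hg).1

lemma isGrayCode_expansion (q : ℕ) {β : List ℕ} (hβ : ∀ b ∈ β, b < 2) :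
    IsGrayCode (expansion q β) :=
  ((isGrayCode_grayN _ _).map fun u _ v _ => hamming_map (add_left_injective 1) u v).map
    fun _ hu _ hv => hamming_place hβ (length_of_mem_map_grayN hu) (length_of_mem_map_grayN hv)

lemma nodup_expansion (q : ℕ) {β : List ℕ} (hβ : ∀ b ∈ β, b < 2) : (expansion q β).Nodup := by
  refine ((nodup_grayN _ _).map (List.map_injective_iff.2 (add_left_injective 1))).map_on ?_
  intro u hu v hv huv
  have hlen := length_of_mem_map_grayN hu
  refine eq_of_hamming_eq_zero (hlen.trans (length_of_mem_map_grayN hv).symm) ?_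
  rw [← hamming_place hβ hlen (length_of_mem_map_grayN hv), huv, hamming_self]

lemma mem_expansion {q : ℕ} (hq : 2 ≤ q) {β : List ℕ} (hβ : ∀ b ∈ β, b < 2) {w : List ℕ} :
    w ∈ expansion q β ↔ binarize w = β ∧ ∀ b ∈ w, b < q := by
  simp only [expansion, List.map_map, List.mem_map, Function.comp_def]
  constructor
  · rintro ⟨g, hg, rfl⟩
    have hg' := (mem_grayN.1 hg).2
    refine ⟨binarize_place hβ (by simp), fun b hb => ?_⟩
    rcases mem_place hb with rfl | rfl | hb
    · omega
    · omega
    · obtain ⟨a, ha, rfl⟩ := List.mem_map.1 hb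
      have := hg' a ha
      omega
  · rintro ⟨rfl, hw⟩
    have hnz : ∀ a ∈ nonzeros w, a ≠ 0 ∧ a < q := fun a ha => by
      simp only [nonzeros, List.mem_filter, decide_eq_true_eq] at ha
      exact ⟨ha.2, hw a ha.1⟩
    refine ⟨(nonzeros w).map (· - 1), mem_grayN.2 ⟨by simp [count_one_binarize], ?_⟩, ?_⟩
    · simp only [List.mem_map]
      rintro _ ⟨a, ha, rfl⟩
      have := hnz a ha
      omega
    · conv_rhs => rw [← place_binarize_nonzeros w]
      congr 1
      refine (List.map_map ..).trans (List.map_congr_left fun a ha => ?_) |>.trans (List.map_id _)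
      have := hnz a ha
      simp only [Function.comp_apply, id]
      omega

lemma head?_expansion {q : ℕ} (hq : 2 ≤ q) {β : List ℕ} (hβ : ∀ b ∈ β, b < 2) :
    (expansion q β).head? = some β := by
  simp [expansion, head?_grayN (by omega : 0 < q - 1), place_replicate_one hβ]

lemma expansion_ne_nil {q : ℕ} (hq : 2 ≤ q) {β : List ℕ} (hβ : ∀ b ∈ β, b < 2) :
    expansion q β ≠ [] := by
  simp [← List.head?_eq_none_iff, head?_expansion hq hβ]

lemma getLast?_expansion {q : ℕ} (hq : Odd q) (hq3 : 3 ≤ q) (j : ℕ) {γ : List ℕ}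
    (hγ : ∀ b ∈ γ, b < 2) :
    (expansion q (List.replicate j 0 ++ 1 :: γ)).getLast? =
      some (List.replicate j 0 ++ (q - 1) :: γ) := by
  have heven : Even (q - 1) := by
    rcases hq with ⟨r, rfl⟩
    exact ⟨r, by omega⟩
  have hcount : (List.replicate j 0 ++ 1 :: γ).count 1 = γ.count 1 + 1 := by
    simp [List.count_replicate]
  rw [expansion, hcount, List.getLast?_map, List.getLast?_map,
    getLast?_grayN_succ heven (by omega)]
  simp [place_zeros_one_append, place_replicate_one hγ, show q - 1 - 1 + 1 = q - 1 by omega]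

lemma Gamma_succ (q k n j : ℕ) : Gamma q k n (j + 1) = alt ((Fblock k n j).map (expansion q)) :=
  rfl

lemma mem_Gamma {q k n j : ℕ} (hq : 2 ≤ q) (hk : 0 < k) {x : List ℕ} :
    x ∈ Gamma q k n (j + 1) ↔ binarize x ∈ Fblock k n j ∧ ∀ b ∈ x, b < q := by
  rw [Gamma_succ, (alt_perm_flatten _).mem_iff]
  simp only [List.mem_flatten, List.mem_map, exists_exists_and_eq_and]
  constructor
  · rintro ⟨β, hβ, hx⟩
    obtain ⟨rfl, hlt⟩ := (mem_expansion hq (lt_two_of_mem_Fblock hk hβ)).1 hx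
    exact ⟨hβ, hlt⟩
  · rintro ⟨hβ, hlt⟩
    exact ⟨_, hβ, (mem_expansion hq (lt_two_of_mem_Fblock hk hβ)).2 ⟨rfl, hlt⟩⟩

lemma nodup_Gamma {q k n j : ℕ} (hq : 2 ≤ q) (hk : 0 < k) : (Gamma q k n (j + 1)).Nodup := by
  rw [Gamma_succ, (alt_perm_flatten _).nodup_iff, List.nodup_flatten, List.pairwise_map]
  refine ⟨?_, (nodup_Fblock hk n j).imp_of_mem fun hβ hβ' hne x hx hx' => hne ?_⟩
  · simp only [List.mem_map]
    rintro _ ⟨β, hβ, rfl⟩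
    exact nodup_expansion q (lt_two_of_mem_Fblock hk hβ)
  · rw [← ((mem_expansion hq (lt_two_of_mem_Fblock hk hβ)).1 hx).1,
      ← ((mem_expansion hq (lt_two_of_mem_Fblock hk hβ')).1 hx').1]

lemma isGrayCode_Gamma {q k n j : ℕ} (hq : Odd q) (hq3 : 3 ≤ q) (hk : 0 < k) :
    IsGrayCode (Gamma q k n (j + 1)) := by
  have hbin {β : List ℕ} (hβ : β ∈ Fblock k n j) : ∀ b ∈ β, b < 2 :=
    lt_two_of_mem_Fblock hk hβ
  rw [Gamma_succ]
  refine isChain_alt (fun u v h => by rwa [hamming_comm]) ?_ ?_ ?_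
  · simp only [List.mem_map]
    rintro _ ⟨β, hβ, rfl⟩
    exact expansion_ne_nil (by omega) (hbin hβ)
  · simp only [List.mem_map]
    rintro _ ⟨β, hβ, rfl⟩
    exact isGrayCode_expansion q (hbin hβ)
  · refine (List.isChain_map _).2 ((isGrayCode_Fblock hk n j).imp_of_mem_imp ?_)
    intro β β' hβ hβ' h
    rw [head?_expansion (by omega) (hbin hβ), head?_expansion (by omega) (hbin hβ')]
    obtain ⟨w, hw, rfl⟩ := mem_Fblock.1 hβ
    obtain ⟨w', hw', rfl⟩ := mem_Fblock.1 hβ'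
    rw [getLast?_expansion hq hq3 j (mem_F hk |>.1 hw).2.1,
      getLast?_expansion hq hq3 j (mem_F hk |>.1 hw').2.1]
    simp_all

lemma head?_Gamma {q k n j : ℕ} (hq : 2 ≤ q) (hk : 0 < k) :
    (Gamma q k n (j + 1)).head? = (Fblock k n j).head? := by
  obtain ⟨β, l, hβl⟩ := List.exists_cons_of_ne_nil (Fblock_ne_nil hk n j)
  have hβ : ∀ b ∈ β, b < 2 :=
    lt_two_of_mem_Fblock hk (hβl ▸ List.mem_cons_self : β ∈ Fblock k n j)
  rw [Gamma_succ, hβl, List.map_cons, head?_alt_cons (expansion_ne_nil hq hβ),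
    head?_expansion hq hβ, List.head?_cons]

lemma Gamma_ne_nil {q k n j : ℕ} (hq : 2 ≤ q) (hk : 0 < k) : Gamma q k n (j + 1) ≠ [] :=
  fun h => Fblock_ne_nil hk n j (List.head?_eq_none_iff.1 (by rw [← head?_Gamma hq hk, h]; rfl))

lemma getLast?_Gamma {q k n j : ℕ} (hq : Odd q) (hq3 : 3 ≤ q) (hk : 0 < k) (h : j + 1 < n) :
    ∃ a ≠ 0, (Gamma q k n (j + 1)).getLast? =
      (F k (n - (j + 2))).getLast?.map (List.replicate j 0 ++ a :: 1 :: ·) := by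
  have hall : ∀ L ∈ (Fblock k n j).map (expansion q), L ≠ [] := by
    simp only [List.mem_map]
    rintro _ ⟨β, hβ, rfl⟩
    exact expansion_ne_nil (by omega) (lt_two_of_mem_Fblock hk hβ)
  rw [Gamma_succ, getLast?_alt hall, List.getLast?_map, getLast?_Fblock hk h]
  rcases hz : (F k (n - (j + 2))).getLast? with _ | z
  · exact ⟨1, one_ne_zero, rfl⟩
  have hzbin : ∀ b ∈ z, b < 2 := (mem_F hk |>.1 (List.mem_of_getLast? hz)).2.1
  have hlastbin : ∀ b ∈ List.replicate j 0 ++ 1 :: 1 :: z, b < 2 := by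
    simp only [List.mem_append, List.mem_replicate, List.mem_cons]
    rintro b (⟨-, rfl⟩ | rfl | rfl | hb)
    exacts [by omega, by omega, by omega, hzbin b hb]
  split
  · refine ⟨q - 1, (by omega : q - 1 ≠ 0), ?_⟩
    simp [getLast?_expansion hq hq3 j (List.forall_mem_cons.2 ⟨one_lt_two, hzbin⟩)]
  · exact ⟨1, one_ne_zero, by simp [head?_expansion (by omega : 2 ≤ q) hlastbin]⟩

lemma mem_Fodd {q k n : ℕ} (hq : 2 ≤ q) (hk : 0 < k) (hn : k ≤ n) {x : List ℕ} :
    x ∈ Fodd q k n ↔ x.length = n ∧ (∀ b ∈ x, b < q) ∧ ¬ List.replicate k 0 <:+: x := by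
  have hbin : ∀ b ∈ binarize x, b < 2 := by
    simp only [binarize, List.mem_map]
    rintro _ ⟨b, -, rfl⟩
    split <;> omega
  have hFodd : x ∈ Fodd q k n ↔ binarize x ∈ F k n ∧ ∀ b ∈ x, b < q := by
    simp [Fodd, F_of_le hk hn, mem_Gamma hq hk, ← and_assoc, exists_and_right]
  rw [hFodd, mem_F hk, length_binarize, replicate_infix_binarize_iff]
  tauto

lemma nodup_Fodd {q k n : ℕ} (hq : 2 ≤ q) (hk : 0 < k) : (Fodd q k n).Nodup :=
  List.nodup_flatten_range (fun x => (binarize x).idxOf 1) (fun _ _ => nodup_Gamma hq hk)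
    fun _ _ _ hx => idxOf_one_of_mem_Fblock ((mem_Gamma hq hk).1 hx).1

lemma isGrayCode_Fodd {q k n : ℕ} (hq : Odd q) (hq3 : 3 ≤ q) (hk : 0 < k) (hn : k ≤ n) :
    IsGrayCode (Fodd q k n) := by
  refine isGrayCode_flatten_range (fun _ _ => Gamma_ne_nil (by omega) hk)
    (fun _ _ => isGrayCode_Gamma hq hq3 hk) (fun j hj => ?_)
  obtain ⟨a, ha, hlast⟩ := getLast?_Gamma hq hq3 hk (by omega : j + 1 < n)
  rw [hlast, head?_Gamma (by omega) hk, head?_Fblock]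
  rcases (F k (n - (j + 2))).getLast? with _ | z
  · simp
  · simpa using hamming_zeros_cons_one_append ha j z

/-- For `q ≥ 3` odd and `k ≥ 2`, the list `F(n,q,k) = Γ_1 ∘ ⋯ ∘ Γ_k` is a Gray code
list with Hamming distance `1` for the set of length-`n` strings over `{0,...,q-1}`
avoiding `k` consecutive `0`'s. -/
theorem stmt14 (q k n : ℕ) (hq : Odd q) (hq3 : 3 ≤ q) (hk : 2 ≤ k) (hn : k ≤ n) :
    List.Chain' (fun u v => hamming u v = 1) (Fodd q k n) ∧
    (Fodd q k n).Nodup ∧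
    (∀ w : List ℕ, w ∈ Fodd q k n ↔
      (w.length = n ∧ (∀ b ∈ w, b < q) ∧ ¬ (List.replicate k 0 <:+: w))) :=
  ⟨isGrayCode_Fodd hq hq3 (by omega) hn, nodup_Fodd (by omega) (by omega),
    fun _ => mem_Fodd (by omega) (by omega) hn⟩
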